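/- Let p be an odd prime and let H be a nontrivial subgroup of F_p^×. Suppose A and B are nonempty H-closed subsets of F_p such that 0 ∉ A, 0 ∉ B, and 0 ∉ A+B. Then |A| + |B| ≤ p − 1 and |A+B| ≥ |A| + |B|, where A+B = {a+b : a ∈ A, b ∈ B}. -/

import Mathlib

open Pointwise

/-!
Since `0 ∉ A`, `H` acts freely on `A`, so `|H|` divides `|A|`; likewise for `B` and `A + B`.
As `A` and `-B` are disjoint subsets of `F_p^×`, `|A| + |B| ≤ p - 1`, and Cauchy–Davenport then
gives `|A + B| ≥ |A| + |B| - 1`. Equality is impossible: it would make the multiple `|A + B|` of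
`|H|` exactly one less than the multiple `|A| + |B|`, while `|H| ≥ 2`.
-/

theorem Nat.le_of_sub_one_le_of_dvd {d n m : ℕ} (hd : 2 ≤ d) (hn : d ∣ n) (hm : d ∣ m)
    (hle : n - 1 ≤ m) : n ≤ m := by
  by_contra! hlt
  have : d ∣ n - m := Nat.dvd_sub hn hm
  rw [show n - m = 1 by omega, Nat.dvd_one] at this
  omega

theorem Subgroup.card_dvd_ncard_of_mul_mem {G : Type*} [Group G] (H : Subgroup G) {T : Set G}
    (hT : ∀ t ∈ T, ∀ h ∈ H, t * h ∈ T) : Nat.card H ∣ T.ncard := by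
  have hTH : T * (H : Set G) = T :=
    (Set.mul_subset_iff.2 hT).antisymm (Set.subset_mul_left T H.one_mem)
  rw [← Nat.card_coe_set_eq, ← hTH, H.card_mul_eq_card_subgroup_mul_card_quotient]
  exact dvd_mul_right _ _

theorem ZMod.card_subgroup_dvd_ncard {p : ℕ} [Fact p.Prime] (H : Subgroup (ZMod p)ˣ)
    {A : Set (ZMod p)} (hA0 : (0 : ZMod p) ∉ A)
    (hA : ∀ h : H, ∀ a ∈ A, ((h : (ZMod p)ˣ) : ZMod p) * a ∈ A) :
    Nat.card H ∣ A.ncard := by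
  have hunits : A ⊆ Set.range (Units.val : (ZMod p)ˣ → ZMod p) := fun a ha =>
    ⟨(isUnit_iff_ne_zero.2 (ne_of_mem_of_not_mem ha hA0)).unit, rfl⟩
  rw [← Set.ncard_preimage_of_injective_subset_range Units.val_injective hunits]
  refine H.card_dvd_ncard_of_mul_mem fun u hu h hh => ?_
  simpa [mul_comm] using hA ⟨h, hh⟩ u hu

theorem Set.ncard_add_ncard_le_card_sub_one_of_zero_notMem {α : Type*} [AddGroup α] [Finite α]
    {A B : Set α} (hA : (0 : α) ∉ A) (hB : (0 : α) ∉ B) (hAB : (0 : α) ∉ A + B) :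
    A.ncard + B.ncard ≤ Nat.card α - 1 := by
  have hdisj : Disjoint A (-B) := Set.disjoint_left.2 fun a ha hb =>
    hAB ⟨a, ha, -a, hb, add_neg_cancel a⟩
  have h0 : (0 : α) ∉ A ∪ -B := by simp [hA, hB]
  have := Set.ncard_le_card (insert 0 (A ∪ -B))
  rw [Set.ncard_insert_of_notMem h0, Set.ncard_union_eq hdisj, Set.ncard_neg] at this
  omega

theorem ZMod.min_le_ncard_add {p : ℕ} [Fact p.Prime] {A B : Set (ZMod p)}
    (hA : A.Nonempty) (hB : B.Nonempty) : min p (A.ncard + B.ncard - 1) ≤ (A + B).ncard := by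
  classical
  simpa [Set.ncard_eq_toFinset_card', Set.toFinset_add] using
    ZMod.cauchy_davenport Fact.out (s := A.toFinset) (t := B.toFinset) (by simpa) (by simpa)

theorem cauchy_davenport_H_closed (p : ℕ) [Fact p.Prime]
    (H : Subgroup (ZMod p)ˣ) (hH : H ≠ ⊥)
    (A B : Set (ZMod p)) (hA : A.Nonempty) (hB : B.Nonempty)
    (hAclosed : ∀ (h : H), ∀ a ∈ A, ((h : (ZMod p)ˣ) : ZMod p) * a ∈ A)
    (hBclosed : ∀ (h : H), ∀ b ∈ B, ((h : (ZMod p)ˣ) : ZMod p) * b ∈ B)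
    (hA0 : (0 : ZMod p) ∉ A) (hB0 : (0 : ZMod p) ∉ B) (hAB0 : (0 : ZMod p) ∉ A + B) :
    A.ncard + B.ncard ≤ p - 1 ∧ A.ncard + B.ncard ≤ (A + B).ncard := by
  have hsum : A.ncard + B.ncard ≤ p - 1 := by
    simpa using Set.ncard_add_ncard_le_card_sub_one_of_zero_notMem hA0 hB0 hAB0
  refine ⟨hsum, ?_⟩
  have hABclosed : ∀ (h : H), ∀ x ∈ A + B, ((h : (ZMod p)ˣ) : ZMod p) * x ∈ A + B := by
    rintro h _ ⟨a, ha, b, hb, rfl⟩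
    exact ⟨_, hAclosed h a ha, _, hBclosed h b hb, (mul_add _ _ _).symm⟩
  have hCD := ZMod.min_le_ncard_add hA hB
  rw [min_eq_right (by omega)] at hCD
  exact Nat.le_of_sub_one_le_of_dvd (H.one_lt_card_iff_ne_bot.2 hH)
    (dvd_add (ZMod.card_subgroup_dvd_ncard H hA0 hAclosed)
      (ZMod.card_subgroup_dvd_ncard H hB0 hBclosed))
    (ZMod.card_subgroup_dvd_ncard H hAB0 hABclosed) hCD
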